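/- arXiv:2510.00722 — 3 statements merged into one kernel-verified Lean document; each statement's English description precedes it below -/
import Mathlib

section
/- Let $H$ be a separable Hilbert space with orthonormal basis $(\varphi_i)$ of eigenvectors of a positive self-adjoint operator $L$ with eigenvalues $\lambda_i > 0$, and define $\|v\|_V^2 = \sum_i \lambda_i (v,\varphi_i)_H^2$. Let $A : V \to V'$ satisfy $|\langle Av,w\rangle| \le \beta\|v\|_V\|w\|_V$ for all $v,w \in V$. Then the $k$-fold Kronecker sum $A_k = \sum_{l=1}^k I^{\otimes(l-1)} \otimes A \otimes I^{\otimes(k-l)}$ is bounded from $V_1^0(k)$ to its dual with the same constant: $\langle A_k u, v\rangle \le \beta\|u\|_{V_1^0(k)}\|v\|_{V_1^0(k)}$, where $\|v\|_{V_1^0(k)}^2 = \sum_{\vec{i} \in \mathbb{N}^k} (\sum_{l=1}^k \lambda_{\vec{i}_l}) \langle v,\varphi_{\vec{i}}\rangle^2$. -/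
lemma aux_finset_cs {ι : Type*} (s : Finset ι) (f g : ι → ℝ)
    (hf : ∀ i, 0 ≤ f i) (hg : ∀ i, 0 ≤ g i) :
    ∑ i ∈ s, Real.sqrt (f i) * Real.sqrt (g i)
      ≤ Real.sqrt (∑ i ∈ s, f i) * Real.sqrt (∑ i ∈ s, g i) := by
  have h := Finset.sum_mul_sq_le_sq_mul_sq s (fun i => Real.sqrt (f i)) (fun i => Real.sqrt (g i))
  have hf2 : ∑ i ∈ s, (Real.sqrt (f i)) ^ 2 = ∑ i ∈ s, f i :=
    Finset.sum_congr rfl fun i _ => Real.sq_sqrt (hf i)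
  have hg2 : ∑ i ∈ s, (Real.sqrt (g i)) ^ 2 = ∑ i ∈ s, g i :=
    Finset.sum_congr rfl fun i _ => Real.sq_sqrt (hg i)
  rw [hf2, hg2] at h
  have h0 : 0 ≤ ∑ i ∈ s, Real.sqrt (f i) * Real.sqrt (g i) :=
    Finset.sum_nonneg fun i _ => mul_nonneg (Real.sqrt_nonneg _) (Real.sqrt_nonneg _)
  calc ∑ i ∈ s, Real.sqrt (f i) * Real.sqrt (g i)
      = Real.sqrt ((∑ i ∈ s, Real.sqrt (f i) * Real.sqrt (g i)) ^ 2) := (Real.sqrt_sq h0).symm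
    _ ≤ Real.sqrt ((∑ i ∈ s, f i) * (∑ i ∈ s, g i)) := Real.sqrt_le_sqrt h
    _ = _ := Real.sqrt_mul (Finset.sum_nonneg fun i _ => hf i) _

lemma aux_sqrt_mul_le {x y : ℝ} (hx : 0 ≤ x) (hy : 0 ≤ y) :
    Real.sqrt x * Real.sqrt y ≤ x + y := by
  nlinarith [sq_nonneg (Real.sqrt x - Real.sqrt y), Real.sq_sqrt hx, Real.sq_sqrt hy,
    Real.sqrt_nonneg x, Real.sqrt_nonneg y]

lemma aux_tsum_cs {ι : Type*} {P Q : ι → ℝ} (hP : Summable P) (hQ : Summable Q)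
    (hP0 : ∀ i, 0 ≤ P i) (hQ0 : ∀ i, 0 ≤ Q i) :
    ∑' i, Real.sqrt (P i) * Real.sqrt (Q i)
      ≤ Real.sqrt (∑' i, P i) * Real.sqrt (∑' i, Q i) := by
  have hfs : Summable (fun i => Real.sqrt (P i) * Real.sqrt (Q i)) :=
    (hP.add hQ).of_nonneg_of_le (fun i => mul_nonneg (Real.sqrt_nonneg _) (Real.sqrt_nonneg _))
      (fun i => aux_sqrt_mul_le (hP0 i) (hQ0 i))
  refine Summable.tsum_le_of_sum_le hfs fun s => ?_
  calc ∑ i ∈ s, Real.sqrt (P i) * Real.sqrt (Q i)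
      ≤ Real.sqrt (∑ i ∈ s, P i) * Real.sqrt (∑ i ∈ s, Q i) := aux_finset_cs s P Q hP0 hQ0
    _ ≤ Real.sqrt (∑' i, P i) * Real.sqrt (∑' i, Q i) :=
        mul_le_mul (Real.sqrt_le_sqrt (Summable.sum_le_tsum s (fun i _ => hP0 i) hP))
          (Real.sqrt_le_sqrt (Summable.sum_le_tsum s (fun i _ => hQ0 i) hQ))
          (Real.sqrt_nonneg _) (Real.sqrt_nonneg _)

set_option maxHeartbeats 2000000 in
/-- Let `H` be a separable Hilbert space with orthonormal eigenbasis
`(φ_i)` of a positive self-adjoint operator `L` with eigenvalues `λ_i > 0`, so that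
`‖v‖_V² = ∑ λ_i ⟨v,φ_i⟩²`.  We work in the coefficient picture: an element of `V` is a
coefficient sequence `g : ℕ → ℝ` (with `∑ λ_p g(p)² < ∞`), the operator `A : V → V'` is
given by its matrix `a p r = ⟨A φ_p, φ_r⟩`, and the boundedness assumption
`|⟨Av,w⟩| ≤ β ‖v‖_V ‖w‖_V` reads
`∑_{p,r} g(p) w(r) a(p,r) ≤ β √(∑ λ_p g(p)²) √(∑ λ_r w(r)²)`.
An element of the tensor space `V¹₀(k)` is a coefficient family `u : ℕ^k → ℝ` with
`‖u‖²_{V¹₀(k)} = ∑_{i ∈ ℕ^k} (∑_l λ_{i_l}) u(i)²`, and the pairing of the Kronecker sum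
`A_k = ∑_l I^{⊗(l−1)} ⊗ A ⊗ I^{⊗(k−l)}` is
`⟨A_k u, v⟩ = ∑_l ∑_{i ∈ ℕ^k} ∑_r u(i) v(i[l ↦ r]) a(i_l, r)`.
Conclusion: `⟨A_k u, v⟩ ≤ β ‖u‖_{V¹₀(k)} ‖v‖_{V¹₀(k)}`. -/
theorem kronecker_sum_bounded
    (lam : ℕ → ℝ) (hlam : ∀ i, 0 < lam i) (β : ℝ) (hβ : 0 < β)
    (a : ℕ → ℕ → ℝ)
    (ha : ∀ g w : ℕ → ℝ,
      Summable (fun p => lam p * g p ^ 2) → Summable (fun r => lam r * w r ^ 2) →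
      (∑' p, ∑' r, g p * w r * a p r) ≤
        β * Real.sqrt (∑' p, lam p * g p ^ 2) * Real.sqrt (∑' r, lam r * w r ^ 2))
    (k : ℕ) (hk : 1 ≤ k)
    (u v : (Fin k → ℕ) → ℝ)
    (hu : Summable (fun i : Fin k → ℕ => (∑ l, lam (i l)) * u i ^ 2))
    (hv : Summable (fun i : Fin k → ℕ => (∑ l, lam (i l)) * v i ^ 2)) :
    (∑' (l : Fin k), ∑' (i : Fin k → ℕ), ∑' (r : ℕ),
        u i * v (Function.update i l r) * a (i l) r) ≤
      β * Real.sqrt (∑' i : Fin k → ℕ, (∑ l, lam (i l)) * u i ^ 2)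
        * Real.sqrt (∑' i : Fin k → ℕ, (∑ l, lam (i l)) * v i ^ 2) := by
  classical
  have hul : ∀ l : Fin k, Summable (fun i : Fin k → ℕ => lam (i l) * u i ^ 2) := by
    intro l
    refine hu.of_nonneg_of_le (fun i => mul_nonneg (hlam _).le (sq_nonneg _)) (fun i => ?_)
    exact mul_le_mul_of_nonneg_right
      (Finset.single_le_sum (f := fun m => lam (i m)) (fun m _ => (hlam _).le)
        (Finset.mem_univ l)) (sq_nonneg _)
  have hvl : ∀ l : Fin k, Summable (fun i : Fin k → ℕ => lam (i l) * v i ^ 2) := by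
    intro l
    refine hv.of_nonneg_of_le (fun i => mul_nonneg (hlam _).le (sq_nonneg _)) (fun i => ?_)
    exact mul_le_mul_of_nonneg_right
      (Finset.single_le_sum (f := fun m => lam (i m)) (fun m _ => (hlam _).le)
        (Finset.mem_univ l)) (sq_nonneg _)
  set P : Fin k → ℝ := fun l => ∑' i : Fin k → ℕ, lam (i l) * u i ^ 2 with hPdef
  set Q : Fin k → ℝ := fun l => ∑' i : Fin k → ℕ, lam (i l) * v i ^ 2 with hQdef
  have hP0 : ∀ l, 0 ≤ P l := fun l => tsum_nonneg fun i => mul_nonneg (hlam _).le (sq_nonneg _)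
  have hQ0 : ∀ l, 0 ≤ Q l := fun l => tsum_nonneg fun i => mul_nonneg (hlam _).le (sq_nonneg _)
  have key : ∀ l : Fin k,
      (∑' (i : Fin k → ℕ), ∑' (r : ℕ), u i * v (Function.update i l r) * a (i l) r)
        ≤ β * (Real.sqrt (P l) * Real.sqrt (Q l)) := by
    intro l
    set e := Equiv.funSplitAt l ℕ with he
    have he1 : ∀ pj : ℕ × ({m : Fin k // m ≠ l} → ℕ), e.symm pj l = pj.1 := by
      intro pj; simp [he, Equiv.funSplitAt, Equiv.piSplitAt]
    have he2 : ∀ (pj : ℕ × ({m : Fin k // m ≠ l} → ℕ)) (r : ℕ),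
        Function.update (e.symm pj) l r = e.symm (r, pj.2) := by
      intro pj r
      funext m
      rcases eq_or_ne m l with hm | hm
      · subst hm; simp [he, Function.update, Equiv.funSplitAt, Equiv.piSplitAt]
      · simp [he, Function.update, hm, Equiv.funSplitAt, Equiv.piSplitAt]
    -- summability of weighted coefficients on the product
    have hprodU : Summable (fun pj : ℕ × ({m : Fin k // m ≠ l} → ℕ) =>
        lam pj.1 * u (e.symm pj) ^ 2) := by
      have h1 : Summable (fun pj : ℕ × ({m : Fin k // m ≠ l} → ℕ) =>
          (∑ m, lam (e.symm pj m)) * u (e.symm pj) ^ 2) := e.symm.summable_iff.mpr hu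
      refine h1.of_nonneg_of_le (fun pj => mul_nonneg (hlam _).le (sq_nonneg _)) (fun pj => ?_)
      rw [← he1 pj]
      exact mul_le_mul_of_nonneg_right
        (Finset.single_le_sum (f := fun m => lam (e.symm pj m)) (fun m _ => (hlam _).le)
          (Finset.mem_univ l)) (sq_nonneg _)
    have hprodV : Summable (fun pj : ℕ × ({m : Fin k // m ≠ l} → ℕ) =>
        lam pj.1 * v (e.symm pj) ^ 2) := by
      have h1 : Summable (fun pj : ℕ × ({m : Fin k // m ≠ l} → ℕ) =>
          (∑ m, lam (e.symm pj m)) * v (e.symm pj) ^ 2) := e.symm.summable_iff.mpr hv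
      refine h1.of_nonneg_of_le (fun pj => mul_nonneg (hlam _).le (sq_nonneg _)) (fun pj => ?_)
      rw [← he1 pj]
      exact mul_le_mul_of_nonneg_right
        (Finset.single_le_sum (f := fun m => lam (e.symm pj m)) (fun m _ => (hlam _).le)
          (Finset.mem_univ l)) (sq_nonneg _)
    have hgsum : ∀ j : {m : Fin k // m ≠ l} → ℕ,
        Summable (fun p => lam p * u (e.symm (p, j)) ^ 2) :=
      fun j => hprodU.comp_injective (fun p q h => congrArg Prod.fst h :
        Function.Injective (fun p : ℕ => (p, j)))
    have hwsum : ∀ j : {m : Fin k // m ≠ l} → ℕ,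
        Summable (fun r => lam r * v (e.symm (r, j)) ^ 2) :=
      fun j => hprodV.comp_injective (fun p q h => congrArg Prod.fst h :
        Function.Injective (fun p : ℕ => (p, j)))
    have hPj : Summable (fun j : {m : Fin k // m ≠ l} → ℕ =>
        ∑' p, lam p * u (e.symm (p, j)) ^ 2) := hprodU.prod_symm.prod
    have hQj : Summable (fun j : {m : Fin k // m ≠ l} → ℕ =>
        ∑' r, lam r * v (e.symm (r, j)) ^ 2) := hprodV.prod_symm.prod
    have hPj0 : ∀ j : {m : Fin k // m ≠ l} → ℕ,
        0 ≤ ∑' p, lam p * u (e.symm (p, j)) ^ 2 :=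
      fun j => tsum_nonneg fun p => mul_nonneg (hlam _).le (sq_nonneg _)
    have hQj0 : ∀ j : {m : Fin k // m ≠ l} → ℕ,
        0 ≤ ∑' r, lam r * v (e.symm (r, j)) ^ 2 :=
      fun j => tsum_nonneg fun r => mul_nonneg (hlam _).le (sq_nonneg _)
    have hPsum : (∑' j : {m : Fin k // m ≠ l} → ℕ, ∑' p, lam p * u (e.symm (p, j)) ^ 2)
        = P l := by
      calc (∑' j : {m : Fin k // m ≠ l} → ℕ, ∑' p, lam p * u (e.symm (p, j)) ^ 2)
          = ∑' jp : ({m : Fin k // m ≠ l} → ℕ) × ℕ, lam jp.2 * u (e.symm (jp.2, jp.1)) ^ 2 :=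
            (Summable.tsum_prod hprodU.prod_symm).symm
        _ = ∑' pj : ℕ × ({m : Fin k // m ≠ l} → ℕ), lam pj.1 * u (e.symm pj) ^ 2 :=
            (Equiv.prodComm _ _).tsum_eq (fun pj : ℕ × ({m : Fin k // m ≠ l} → ℕ) => lam pj.1 * u (e.symm pj) ^ 2)
        _ = ∑' pj : ℕ × ({m : Fin k // m ≠ l} → ℕ), lam (e.symm pj l) * u (e.symm pj) ^ 2 :=
            tsum_congr fun pj => by rw [he1]
        _ = ∑' i : Fin k → ℕ, lam (i l) * u i ^ 2 := Equiv.tsum_eq e.symm (fun i => lam (i l) * u i ^ 2)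
        _ = P l := rfl
    have hQsum : (∑' j : {m : Fin k // m ≠ l} → ℕ, ∑' r, lam r * v (e.symm (r, j)) ^ 2)
        = Q l := by
      calc (∑' j : {m : Fin k // m ≠ l} → ℕ, ∑' r, lam r * v (e.symm (r, j)) ^ 2)
          = ∑' jp : ({m : Fin k // m ≠ l} → ℕ) × ℕ, lam jp.2 * v (e.symm (jp.2, jp.1)) ^ 2 :=
            (Summable.tsum_prod hprodV.prod_symm).symm
        _ = ∑' pj : ℕ × ({m : Fin k // m ≠ l} → ℕ), lam pj.1 * v (e.symm pj) ^ 2 :=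
            (Equiv.prodComm _ _).tsum_eq (fun pj : ℕ × ({m : Fin k // m ≠ l} → ℕ) => lam pj.1 * v (e.symm pj) ^ 2)
        _ = ∑' pj : ℕ × ({m : Fin k // m ≠ l} → ℕ), lam (e.symm pj l) * v (e.symm pj) ^ 2 :=
            tsum_congr fun pj => by rw [he1]
        _ = ∑' i : Fin k → ℕ, lam (i l) * v i ^ 2 := Equiv.tsum_eq e.symm (fun i => lam (i l) * v i ^ 2)
        _ = Q l := rfl
    have hEG : (∑' (i : Fin k → ℕ), ∑' (r : ℕ), u i * v (Function.update i l r) * a (i l) r)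
        = ∑' pj : ℕ × ({m : Fin k // m ≠ l} → ℕ),
            ∑' r, u (e.symm pj) * v (e.symm (r, pj.2)) * a pj.1 r := by
      refine (Equiv.tsum_eq e.symm
        (fun i => ∑' r, u i * v (Function.update i l r) * a (i l) r)).symm.trans ?_
      exact tsum_congr fun pj => by simp only [he1, he2]
    by_cases hG : Summable (fun pj : ℕ × ({m : Fin k // m ≠ l} → ℕ) =>
        ∑' r, u (e.symm pj) * v (e.symm (r, pj.2)) * a pj.1 r)
    · calc (∑' (i : Fin k → ℕ), ∑' (r : ℕ), u i * v (Function.update i l r) * a (i l) r)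
          = ∑' pj : ℕ × ({m : Fin k // m ≠ l} → ℕ),
              ∑' r, u (e.symm pj) * v (e.symm (r, pj.2)) * a pj.1 r := hEG
        _ = ∑' jp : ({m : Fin k // m ≠ l} → ℕ) × ℕ,
              ∑' r, u (e.symm (jp.2, jp.1)) * v (e.symm (r, jp.1)) * a jp.2 r :=
            ((Equiv.prodComm _ _).tsum_eq (fun pj : ℕ × ({m : Fin k // m ≠ l} → ℕ) =>
              ∑' r, u (e.symm pj) * v (e.symm (r, pj.2)) * a pj.1 r)).symm
        _ = ∑' j : {m : Fin k // m ≠ l} → ℕ,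
              ∑' p, ∑' r, u (e.symm (p, j)) * v (e.symm (r, j)) * a p r :=
            Summable.tsum_prod hG.prod_symm
        _ ≤ ∑' j : {m : Fin k // m ≠ l} → ℕ,
              β * (Real.sqrt (∑' p, lam p * u (e.symm (p, j)) ^ 2)
                * Real.sqrt (∑' r, lam r * v (e.symm (r, j)) ^ 2)) := by
            refine Summable.tsum_le_tsum (fun j => ?_) hG.prod_symm.prod ?_
            · have := ha (fun p => u (e.symm (p, j))) (fun r => v (e.symm (r, j)))
                (hgsum j) (hwsum j)
              calc (∑' p, ∑' r, u (e.symm (p, j)) * v (e.symm (r, j)) * a p r)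
                  ≤ β * Real.sqrt (∑' p, lam p * u (e.symm (p, j)) ^ 2)
                    * Real.sqrt (∑' r, lam r * v (e.symm (r, j)) ^ 2) := this
                _ = β * (Real.sqrt (∑' p, lam p * u (e.symm (p, j)) ^ 2)
                    * Real.sqrt (∑' r, lam r * v (e.symm (r, j)) ^ 2)) := by ring
            · refine ((hPj.add hQj).mul_left β).of_nonneg_of_le
                (fun j => mul_nonneg hβ.le (mul_nonneg (Real.sqrt_nonneg _) (Real.sqrt_nonneg _))) (fun j => ?_)
              exact mul_le_mul_of_nonneg_left
                (aux_sqrt_mul_le (hPj0 j) (hQj0 j)) hβ.le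
        _ = β * ∑' j : {m : Fin k // m ≠ l} → ℕ,
              Real.sqrt (∑' p, lam p * u (e.symm (p, j)) ^ 2)
                * Real.sqrt (∑' r, lam r * v (e.symm (r, j)) ^ 2) := tsum_mul_left
        _ ≤ β * (Real.sqrt (∑' j : {m : Fin k // m ≠ l} → ℕ, ∑' p, lam p * u (e.symm (p, j)) ^ 2)
              * Real.sqrt (∑' j : {m : Fin k // m ≠ l} → ℕ, ∑' r, lam r * v (e.symm (r, j)) ^ 2)) :=
            mul_le_mul_of_nonneg_left (aux_tsum_cs hPj hQj hPj0 hQj0) hβ.le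
        _ = β * (Real.sqrt (P l) * Real.sqrt (Q l)) := by rw [hPsum, hQsum]
    · have hz : (∑' (i : Fin k → ℕ), ∑' (r : ℕ),
          u i * v (Function.update i l r) * a (i l) r) = 0 :=
        hEG.trans (tsum_eq_zero_of_not_summable hG)
      rw [hz]
      exact mul_nonneg hβ.le (mul_nonneg (Real.sqrt_nonneg _) (Real.sqrt_nonneg _))
  have hPsum' : ∑ l, P l = ∑' i : Fin k → ℕ, (∑ l, lam (i l)) * u i ^ 2 := by
    have h := Summable.tsum_finsetSum (s := Finset.univ)
      (f := fun (l : Fin k) (i : Fin k → ℕ) => lam (i l) * u i ^ 2) (fun l _ => hul l)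
    calc ∑ l, P l = ∑' i : Fin k → ℕ, ∑ l, lam (i l) * u i ^ 2 := h.symm
      _ = ∑' i : Fin k → ℕ, (∑ l, lam (i l)) * u i ^ 2 :=
          tsum_congr fun i => (Finset.sum_mul _ _ _).symm
  have hQsum' : ∑ l, Q l = ∑' i : Fin k → ℕ, (∑ l, lam (i l)) * v i ^ 2 := by
    have h := Summable.tsum_finsetSum (s := Finset.univ)
      (f := fun (l : Fin k) (i : Fin k → ℕ) => lam (i l) * v i ^ 2) (fun l _ => hvl l)
    calc ∑ l, Q l = ∑' i : Fin k → ℕ, ∑ l, lam (i l) * v i ^ 2 := h.symm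
      _ = ∑' i : Fin k → ℕ, (∑ l, lam (i l)) * v i ^ 2 :=
          tsum_congr fun i => (Finset.sum_mul _ _ _).symm
  rw [tsum_fintype]
  calc ∑ l : Fin k, (∑' (i : Fin k → ℕ), ∑' (r : ℕ),
        u i * v (Function.update i l r) * a (i l) r)
      ≤ ∑ l : Fin k, β * (Real.sqrt (P l) * Real.sqrt (Q l)) :=
        Finset.sum_le_sum fun l _ => key l
    _ = β * ∑ l : Fin k, Real.sqrt (P l) * Real.sqrt (Q l) := by rw [Finset.mul_sum]
    _ ≤ β * (Real.sqrt (∑ l, P l) * Real.sqrt (∑ l, Q l)) :=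
        mul_le_mul_of_nonneg_left
          (aux_finset_cs Finset.univ P Q hP0 hQ0) hβ.le
    _ = β * Real.sqrt (∑' i : Fin k → ℕ, (∑ l, lam (i l)) * u i ^ 2)
        * Real.sqrt (∑' i : Fin k → ℕ, (∑ l, lam (i l)) * v i ^ 2) := by
        rw [hPsum', hQsum', mul_assoc]
end

section
/- Let $H$ be a separable Hilbert space with eigenbasis $(\varphi_i,\lambda_i)$, $\lambda_i \ge \lambda_{\min} > 0$, of a positive self-adjoint operator $L$, and let $f \in V^\alpha$ (i.e., $\|f\|_{V^\alpha}^2 = \sum_j \lambda_j^\alpha \langle f,\varphi_j\rangle^2 < \infty$) for some $\alpha \ge 0$ and $\varepsilon \in [0,1]$, $k \ge 2$. Define $F_k v = \sum_{l=1}^k I^{\otimes(l-1)} \otimes (-f) \otimes I^{\otimes(k-l)} v$ (inserting $-f$ into the $l$-th tensor slot). Then $\|F_k v\|_{V^\alpha_{-1+\varepsilon}(k)} \le \sqrt{2}\,\lambda_{\min}^{(-2+\varepsilon)/2} k^{\varepsilon/2}\|f\|_{V^\alpha}\|v\|_{V_1^\alpha(k-1)}$ for all $v \in V_1^\alpha(k-1)$.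 -/
set_option maxHeartbeats 1000000

open Finset in
/-- Per-slot bound. -/
lemma kron_aux_perslot
    (lam : ℕ → ℝ) (lamMin : ℝ) (hmin : 0 < lamMin) (hlam : ∀ i, lamMin ≤ lam i)
    (α ε : ℝ) (hα : 0 ≤ α) (hε1 : ε ≤ 1)
    (fc : ℕ → ℝ) (hfc : Summable (fun p => lam p ^ α * fc p ^ 2))
    (m : ℕ) (hm : 1 ≤ m)
    (v : (Fin m → ℕ) → ℝ)
    (hv : Summable (fun i : Fin m → ℕ =>
      (∏ l, lam (i l)) ^ α * (∑ l, lam (i l)) * v i ^ 2))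
    (l : Fin (m + 1)) :
    Summable (fun j : Fin (m+1) → ℕ =>
      (∏ t, lam (j t)) ^ α * (∑ t, lam (j t)) ^ (-1 + ε) *
        (fc (j l) ^ 2 * v (fun i => j (l.succAbove i)) ^ 2)) ∧
    (∑' j : Fin (m+1) → ℕ,
      (∏ t, lam (j t)) ^ α * (∑ t, lam (j t)) ^ (-1 + ε) *
        (fc (j l) ^ 2 * v (fun i => j (l.succAbove i)) ^ 2)) ≤
      (((m:ℝ)+1) ^ (ε-1) * lamMin ^ (ε-2) / m) *
        ((∑' p, lam p ^ α * fc p ^ 2) *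
         (∑' i : Fin m → ℕ, (∏ t, lam (i t)) ^ α * (∑ t, lam (i t)) * v i ^ 2)) := by
  have hm1 : (1:ℝ) ≤ (m:ℝ) := by exact_mod_cast hm
  have hmpos : (0:ℝ) < m := by linarith
  have hKpos : (0:ℝ) < (m:ℝ)+1 := by linarith
  have hlam' : ∀ i, 0 < lam i := fun i => lt_of_lt_of_le hmin (hlam i)
  set C0 : ℝ := ((m:ℝ)+1) ^ (ε-1) * lamMin ^ (ε-2) / m with hC0
  have hC0pos : 0 < C0 :=
    div_pos (mul_pos (Real.rpow_pos_of_pos hKpos _) (Real.rpow_pos_of_pos hmin _)) hmpos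
  have hFterm : ∀ p, 0 ≤ lam p ^ α * fc p ^ 2 :=
    fun p => mul_nonneg (Real.rpow_nonneg (hlam' p).le _) (sq_nonneg _)
  have hVterm : ∀ i : Fin m → ℕ, 0 ≤ (∏ t, lam (i t)) ^ α * (∑ t, lam (i t)) * v i ^ 2 := by
    intro i
    have h1 : (0:ℝ) ≤ ∏ t, lam (i t) := Finset.prod_nonneg (fun t _ => (hlam' _).le)
    have h2 : (0:ℝ) ≤ ∑ t, lam (i t) := Finset.sum_nonneg (fun t _ => (hlam' _).le)
    exact mul_nonneg (mul_nonneg (Real.rpow_nonneg h1 _) h2) (sq_nonneg _)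
  -- the product-space functions
  set Φ : ℕ × (Fin m → ℕ) → ℝ := fun z =>
    (lam z.1 ^ α * fc z.1 ^ 2) *
      ((∏ t, lam (z.2 t)) ^ α * (∑ t, lam (z.2 t)) * v z.2 ^ 2) with hΦ
  have hΦsum : Summable Φ := hfc.mul_of_nonneg hv hFterm hVterm
  set Ψ : ℕ × (Fin m → ℕ) → ℝ := fun z =>
    (lam z.1 * ∏ t, lam (z.2 t)) ^ α * (lam z.1 + ∑ t, lam (z.2 t)) ^ (-1 + ε) *
      (fc z.1 ^ 2 * v z.2 ^ 2) with hΨ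
  -- sigma lower bound
  have hsig : ∀ i : Fin m → ℕ, (m:ℝ) * lamMin ≤ ∑ t, lam (i t) := by
    intro i
    calc (m:ℝ) * lamMin = ∑ _t : Fin m, lamMin := by
          simp [Finset.sum_const, Finset.card_univ, mul_comm]
      _ ≤ ∑ t, lam (i t) := Finset.sum_le_sum (fun t _ => hlam _)
  -- key pointwise inequality
  have hkey : ∀ z : ℕ × (Fin m → ℕ),
      (lam z.1 + ∑ t, lam (z.2 t)) ^ (-1 + ε) ≤ C0 * (∑ t, lam (z.2 t)) := by
    rintro ⟨p, i⟩
    have hS := hsig i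
    have h1 : ((m:ℝ)+1) * lamMin ≤ lam p + ∑ t, lam (i t) := by
      have := hlam p; nlinarith
    have h2 : (lam p + ∑ t, lam (i t)) ^ (-1+ε) ≤ (((m:ℝ)+1) * lamMin) ^ (-1+ε) :=
      Real.rpow_le_rpow_of_nonpos (mul_pos hKpos hmin) h1 (by linarith)
    have he : (-1+ε) = ε - 1 := by ring
    have h3 : (((m:ℝ)+1) * lamMin) ^ (ε-1) = ((m:ℝ)+1) ^ (ε-1) * lamMin ^ (ε-1) :=
      Real.mul_rpow hKpos.le hmin.le
    have h4 : lamMin ^ (ε-1) = lamMin ^ (ε-2) * lamMin := by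
      have he2 : ε - 1 = (ε - 2) + 1 := by ring
      rw [he2, Real.rpow_add_one hmin.ne']
    have h5 : lamMin ≤ (∑ t, lam (i t)) / m := by
      rw [le_div_iff₀ hmpos]; linarith
    have h6 : ((m:ℝ)+1) ^ (ε-1) * (lamMin ^ (ε-2) * lamMin) ≤
        ((m:ℝ)+1) ^ (ε-1) * (lamMin ^ (ε-2) * ((∑ t, lam (i t)) / m)) := by
      exact mul_le_mul_of_nonneg_left
        (mul_le_mul_of_nonneg_left h5 (by positivity)) (by positivity)
    calc (lam p + ∑ t, lam (i t)) ^ (-1+ε) ≤ (((m:ℝ)+1) * lamMin) ^ (-1+ε) := h2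
      _ = ((m:ℝ)+1) ^ (ε-1) * (lamMin ^ (ε-2) * lamMin) := by rw [he, h3, h4]
      _ ≤ C0 * (∑ t, lam (i t)) := by rw [hC0]; calc
            ((m:ℝ)+1) ^ (ε-1) * (lamMin ^ (ε-2) * lamMin)
              ≤ ((m:ℝ)+1) ^ (ε-1) * (lamMin ^ (ε-2) * ((∑ t, lam (i t)) / m)) := h6
            _ = ((m:ℝ)+1) ^ (ε-1) * lamMin ^ (ε-2) / m * (∑ t, lam (i t)) := by ring
  have hΨnonneg : ∀ z, 0 ≤ Ψ z := by
    rintro ⟨p, i⟩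
    have h1 : (0:ℝ) ≤ lam p * ∏ t, lam (i t) :=
      mul_nonneg (hlam' p).le (Finset.prod_nonneg (fun t _ => (hlam' _).le))
    have h2 : (0:ℝ) < lam p + ∑ t, lam (i t) := by
      have := hsig i; have := hlam' p; nlinarith
    exact mul_nonneg (mul_nonneg (Real.rpow_nonneg h1 _) (Real.rpow_nonneg h2.le _))
      (mul_nonneg (sq_nonneg _) (sq_nonneg _))
  have hΨle : ∀ z, Ψ z ≤ C0 * Φ z := by
    rintro ⟨p, i⟩
    have hPd : (0:ℝ) ≤ ∏ t, lam (i t) := Finset.prod_nonneg (fun t _ => (hlam' _).le)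
    have hmr : (lam p * ∏ t, lam (i t)) ^ α = lam p ^ α * (∏ t, lam (i t)) ^ α :=
      Real.mul_rpow (hlam' p).le hPd
    have hnn : 0 ≤ lam p ^ α * (∏ t, lam (i t)) ^ α * (fc p ^ 2 * v i ^ 2) := by
      have := Real.rpow_nonneg (hlam' p).le α
      have := Real.rpow_nonneg hPd α
      positivity
    calc Ψ (p, i)
        = (lam p ^ α * (∏ t, lam (i t)) ^ α * (fc p ^ 2 * v i ^ 2)) *
            ((lam p + ∑ t, lam (i t)) ^ (-1+ε)) := by
          simp only [hΨ, hmr]; ring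
      _ ≤ (lam p ^ α * (∏ t, lam (i t)) ^ α * (fc p ^ 2 * v i ^ 2)) *
            (C0 * (∑ t, lam (i t))) := mul_le_mul_of_nonneg_left (hkey (p, i)) hnn
      _ = C0 * Φ (p, i) := by simp only [hΦ]; ring
  have hΨsum : Summable Ψ :=
    Summable.of_nonneg_of_le hΨnonneg hΨle (hΦsum.mul_left C0)
  have hΨtsum : ∑' z, Ψ z ≤ C0 * ((∑' p, lam p ^ α * fc p ^ 2) *
      (∑' i : Fin m → ℕ, (∏ t, lam (i t)) ^ α * (∑ t, lam (i t)) * v i ^ 2)) := by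
    have h1 : ∑' z, Ψ z ≤ ∑' z, C0 * Φ z := Summable.tsum_le_tsum hΨle hΨsum (hΦsum.mul_left C0)
    have h2 : ∑' z, C0 * Φ z = C0 * ∑' z, Φ z := tsum_mul_left
    have h3 : (∑' p, lam p ^ α * fc p ^ 2) *
        (∑' i : Fin m → ℕ, (∏ t, lam (i t)) ^ α * (∑ t, lam (i t)) * v i ^ 2) = ∑' z, Φ z := by
      apply tsum_mul_tsum_of_summable_norm
      · simpa only [Real.norm_of_nonneg (hFterm _)] using hfc
      · refine Summable.congr hv ?_
        intro i; exact (Real.norm_of_nonneg (hVterm i)).symm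
    rw [h3]; rw [h2] at h1; exact h1
  -- transfer along the equivalence
  have heq : (fun j : Fin (m+1) → ℕ =>
      (∏ t, lam (j t)) ^ α * (∑ t, lam (j t)) ^ (-1 + ε) *
        (fc (j l) ^ 2 * v (fun i => j (l.succAbove i)) ^ 2)) =
      (fun j => Ψ ((Fin.insertNthEquiv (fun _ => ℕ) l).symm j)) := by
    funext j
    have hp : ∏ t, lam (j t) = lam (j l) * ∏ t : Fin m, lam (j (l.succAbove t)) :=
      Fin.prod_univ_succAbove (fun t => lam (j t)) l
    have hs : ∑ t, lam (j t) = lam (j l) + ∑ t : Fin m, lam (j (l.succAbove t)) :=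
      Fin.sum_univ_succAbove (fun t => lam (j t)) l
    simp only [hΨ, Fin.insertNthEquiv, Equiv.coe_fn_symm_mk, hp, hs]
    rfl
  have hsumg : Summable (fun j : Fin (m+1) → ℕ =>
      (∏ t, lam (j t)) ^ α * (∑ t, lam (j t)) ^ (-1 + ε) *
        (fc (j l) ^ 2 * v (fun i => j (l.succAbove i)) ^ 2)) := by
    rw [heq]
    exact ((Fin.insertNthEquiv (fun _ => ℕ) l).symm.summable_iff).mpr hΨsum
  refine ⟨hsumg, ?_⟩
  have htr : (∑' j : Fin (m+1) → ℕ,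
      (∏ t, lam (j t)) ^ α * (∑ t, lam (j t)) ^ (-1 + ε) *
        (fc (j l) ^ 2 * v (fun i => j (l.succAbove i)) ^ 2)) = ∑' z, Ψ z := by
    rw [heq]
    exact ((Fin.insertNthEquiv (fun _ => ℕ) l).symm).tsum_eq Ψ
  rw [htr]
  exact hΨtsum


/-- Coefficient picture: `H` separable Hilbert space with orthonormal
eigenbasis `(φ_i, λ_i)` of a positive self-adjoint operator `L`, `λ_i ≥ λ_min > 0`.
Weighted tensor norms `‖v‖²_{V^α_q(k)} = ∑_{i ∈ ℕ^k} π(λ_i)^α σ(λ_i)^q v̂(i)²` with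
`π(λ_i) = ∏_l λ_{i_l}`, `σ(λ_i) = ∑_l λ_{i_l}`.  Let `f ∈ V^α` have coefficients
`fc : ℕ → ℝ` (so `‖f‖²_{V^α} = ∑ λ_j^α fc(j)²`), and let `k = m + 1 ≥ 2`.  The operator
`F_k v = ∑_{l=1}^k I^{⊗(l−1)} ⊗ (−f) ⊗ I^{⊗(k−l)} v` has coefficients
`⟨F_k v, φ_j⟩ = ∑_l (−fc(j_l)) v̂(j^{(l)})` (`j^{(l)}` omits slot `l`).  Then
`‖F_k v‖_{V^α_{−1+ε}(k)} ≤ √2 λ_min^{(−2+ε)/2} k^{ε/2} ‖f‖_{V^α} ‖v‖_{V^α_1(k−1)}`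
for all `v ∈ V^α_1(k−1)`. -/
theorem kronecker_sum_forcing_bound
    (lam : ℕ → ℝ) (lamMin : ℝ) (hmin : 0 < lamMin) (hlam : ∀ i, lamMin ≤ lam i)
    (α ε : ℝ) (hα : 0 ≤ α) (hε0 : 0 ≤ ε) (hε1 : ε ≤ 1)
    (fc : ℕ → ℝ) (hfc : Summable (fun p => lam p ^ α * fc p ^ 2))
    (m : ℕ) (hm : 1 ≤ m)
    (v : (Fin m → ℕ) → ℝ)
    (hv : Summable (fun i : Fin m → ℕ =>
      (∏ l, lam (i l)) ^ α * (∑ l, lam (i l)) * v i ^ 2)) :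
    Real.sqrt (∑' j : Fin (m + 1) → ℕ,
        (∏ l, lam (j l)) ^ α * (∑ l, lam (j l)) ^ (-1 + ε) *
          (∑ l : Fin (m + 1), (-(fc (j l))) * v (fun i => j (l.succAbove i))) ^ 2) ≤
      Real.sqrt 2 * lamMin ^ ((-2 + ε) / 2) * ((m : ℝ) + 1) ^ (ε / 2) *
        Real.sqrt (∑' p, lam p ^ α * fc p ^ 2) *
        Real.sqrt (∑' i : Fin m → ℕ,
          (∏ l, lam (i l)) ^ α * (∑ l, lam (i l)) * v i ^ 2) := by
  have hm1 : (1:ℝ) ≤ (m:ℝ) := by exact_mod_cast hm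
  have hmpos : (0:ℝ) < m := by linarith
  have hKpos : (0:ℝ) < (m:ℝ)+1 := by linarith
  have hlam' : ∀ i, 0 < lam i := fun i => lt_of_lt_of_le hmin (hlam i)
  set F := ∑' p, lam p ^ α * fc p ^ 2 with hFdef
  set V := ∑' i : Fin m → ℕ, (∏ l, lam (i l)) ^ α * (∑ l, lam (i l)) * v i ^ 2 with hVdef
  have hF0 : 0 ≤ F := tsum_nonneg fun p =>
    mul_nonneg (Real.rpow_nonneg (hlam' p).le _) (sq_nonneg _)
  have hV0 : 0 ≤ V := tsum_nonneg fun i => by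
    have h1 : (0:ℝ) ≤ ∏ t, lam (i t) := Finset.prod_nonneg (fun t _ => (hlam' _).le)
    have h2 : (0:ℝ) ≤ ∑ t, lam (i t) := Finset.sum_nonneg (fun t _ => (hlam' _).le)
    exact mul_nonneg (mul_nonneg (Real.rpow_nonneg h1 _) h2) (sq_nonneg _)
  set C0 : ℝ := ((m:ℝ)+1) ^ (ε-1) * lamMin ^ (ε-2) / m with hC0
  -- per-slot facts
  have hper := fun l : Fin (m+1) =>
    kron_aux_perslot lam lamMin hmin hlam α ε hα hε1 fc hfc m hm v hv l
  -- the dominating function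
  set G : (Fin (m+1) → ℕ) → ℝ := fun j => ((m:ℝ)+1) *
    ∑ l : Fin (m+1), (∏ t, lam (j t)) ^ α * (∑ t, lam (j t)) ^ (-1 + ε) *
      (fc (j l) ^ 2 * v (fun i => j (l.succAbove i)) ^ 2) with hG
  have hGsum : Summable G := by
    apply Summable.mul_left
    exact summable_sum (fun l _ => (hper l).1)
  have hGtsum : ∑' j, G j ≤ ((m:ℝ)+1) * (((m:ℝ)+1) * (C0 * (F * V))) := by
    rw [hG, tsum_mul_left]
    apply mul_le_mul_of_nonneg_left _ hKpos.le
    rw [Summable.tsum_finsetSum (fun l _ => (hper l).1)]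
    calc ∑ l : Fin (m+1), ∑' j : Fin (m+1) → ℕ,
          (∏ t, lam (j t)) ^ α * (∑ t, lam (j t)) ^ (-1 + ε) *
            (fc (j l) ^ 2 * v (fun i => j (l.succAbove i)) ^ 2)
        ≤ ∑ _l : Fin (m+1), C0 * (F * V) :=
          Finset.sum_le_sum (fun l _ => (hper l).2)
      _ = ((m:ℝ)+1) * (C0 * (F * V)) := by
          rw [Finset.sum_const, Finset.card_univ, Fintype.card_fin, nsmul_eq_mul]
          push_cast; ring
  -- pointwise Cauchy-Schwarz bound
  have hCS : ∀ j : Fin (m+1) → ℕ,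
      (∏ t, lam (j t)) ^ α * (∑ t, lam (j t)) ^ (-1 + ε) *
        (∑ l : Fin (m+1), (-(fc (j l))) * v (fun i => j (l.succAbove i))) ^ 2 ≤ G j := by
    intro j
    have hsq : (∑ l : Fin (m+1), (-(fc (j l))) * v (fun i => j (l.succAbove i))) ^ 2 ≤
        ((m:ℝ)+1) * ∑ l : Fin (m+1), fc (j l) ^ 2 * v (fun i => j (l.succAbove i)) ^ 2 := by
      have h := sq_sum_le_card_mul_sum_sq (s := (Finset.univ : Finset (Fin (m+1))))
        (f := fun l => (-(fc (j l))) * v (fun i => j (l.succAbove i)))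
      simpa [Finset.card_univ, mul_pow, Nat.cast_add, Nat.cast_one] using h
    have hP : (0:ℝ) ≤ (∏ t, lam (j t)) ^ α * (∑ t, lam (j t)) ^ (-1 + ε) := by
      have h1 : (0:ℝ) ≤ ∏ t, lam (j t) := Finset.prod_nonneg (fun t _ => (hlam' _).le)
      have h2 : (0:ℝ) ≤ ∑ t, lam (j t) := Finset.sum_nonneg (fun t _ => (hlam' _).le)
      exact mul_nonneg (Real.rpow_nonneg h1 _) (Real.rpow_nonneg h2 _)
    calc (∏ t, lam (j t)) ^ α * (∑ t, lam (j t)) ^ (-1 + ε) *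
          (∑ l : Fin (m+1), (-(fc (j l))) * v (fun i => j (l.succAbove i))) ^ 2
        ≤ (∏ t, lam (j t)) ^ α * (∑ t, lam (j t)) ^ (-1 + ε) *
          (((m:ℝ)+1) * ∑ l : Fin (m+1), fc (j l) ^ 2 * v (fun i => j (l.succAbove i)) ^ 2) :=
          mul_le_mul_of_nonneg_left hsq hP
      _ = G j := by rw [hG, mul_left_comm, Finset.mul_sum]
  -- total bound
  set B : ℝ := 2 * (((m:ℝ)+1) ^ ε * (lamMin ^ (ε-2) * (F * V))) with hB
  have hconst : ((m:ℝ)+1) * (((m:ℝ)+1) * (C0 * (F * V))) ≤ B := by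
    have hKK : ((m:ℝ)+1) * (((m:ℝ)+1) * (C0 * (F * V))) =
        (((m:ℝ)+1) * ((m:ℝ)+1) * ((m:ℝ)+1) ^ (ε-1) / m) * (lamMin ^ (ε-2) * (F * V)) := by
      rw [hC0]; ring
    have hKe : ((m:ℝ)+1) * ((m:ℝ)+1) * ((m:ℝ)+1) ^ (ε-1) = ((m:ℝ)+1) ^ ε * ((m:ℝ)+1) := by
      have h1 : ((m:ℝ)+1) ^ ε = ((m:ℝ)+1) ^ ((ε-1)+1) := by norm_num
      rw [h1, Real.rpow_add_one hKpos.ne']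
      ring
    have hdiv : ((m:ℝ)+1) / m ≤ 2 := by
      rw [div_le_iff₀ hmpos]; linarith
    have hFV : 0 ≤ lamMin ^ (ε-2) * (F * V) := by
      have := Real.rpow_nonneg hmin.le (ε-2); positivity
    have h2 : ((m:ℝ)+1) * ((m:ℝ)+1) * ((m:ℝ)+1) ^ (ε-1) / m ≤ 2 * ((m:ℝ)+1) ^ ε := by
      rw [hKe]
      have : ((m:ℝ)+1) ^ ε * ((m:ℝ)+1) / m = ((m:ℝ)+1) ^ ε * (((m:ℝ)+1) / m) := by ring
      rw [this]
      calc ((m:ℝ)+1) ^ ε * (((m:ℝ)+1) / m) ≤ ((m:ℝ)+1) ^ ε * 2 :=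
            mul_le_mul_of_nonneg_left hdiv (Real.rpow_nonneg hKpos.le _)
        _ = 2 * ((m:ℝ)+1) ^ ε := by ring
    rw [hKK, hB]
    calc (((m:ℝ)+1) * ((m:ℝ)+1) * ((m:ℝ)+1) ^ (ε-1) / m) * (lamMin ^ (ε-2) * (F * V))
        ≤ (2 * ((m:ℝ)+1) ^ ε) * (lamMin ^ (ε-2) * (F * V)) :=
          mul_le_mul_of_nonneg_right h2 hFV
      _ = 2 * (((m:ℝ)+1) ^ ε * (lamMin ^ (ε-2) * (F * V))) := by ring
  -- RHS as a single sqrt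
  have hRHS : Real.sqrt 2 * lamMin ^ ((-2 + ε) / 2) * ((m:ℝ)+1) ^ (ε / 2) *
      Real.sqrt F * Real.sqrt V = Real.sqrt B := by
    rw [hB, Real.sqrt_mul (by norm_num : (0:ℝ) ≤ 2),
      Real.sqrt_mul (Real.rpow_nonneg hKpos.le _),
      Real.sqrt_mul (Real.rpow_nonneg hmin.le _),
      Real.sqrt_mul hF0]
    have e1 : Real.sqrt (((m:ℝ)+1) ^ ε) = ((m:ℝ)+1) ^ (ε/2) := by
      rw [Real.sqrt_eq_rpow, ← Real.rpow_mul hKpos.le]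
      congr 1; ring
    have e2 : Real.sqrt (lamMin ^ (ε-2)) = lamMin ^ ((-2+ε)/2) := by
      rw [Real.sqrt_eq_rpow, ← Real.rpow_mul hmin.le]
      congr 1; ring
    rw [e1, e2]; ring
  rw [hRHS]
  apply Real.sqrt_le_sqrt
  by_cases hsum : Summable (fun j : Fin (m+1) → ℕ =>
      (∏ t, lam (j t)) ^ α * (∑ t, lam (j t)) ^ (-1 + ε) *
        (∑ l : Fin (m+1), (-(fc (j l))) * v (fun i => j (l.succAbove i))) ^ 2)
  · calc ∑' j : Fin (m+1) → ℕ,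
          (∏ t, lam (j t)) ^ α * (∑ t, lam (j t)) ^ (-1 + ε) *
            (∑ l : Fin (m+1), (-(fc (j l))) * v (fun i => j (l.succAbove i))) ^ 2
        ≤ ∑' j, G j := Summable.tsum_le_tsum hCS hsum hGsum
      _ ≤ ((m:ℝ)+1) * (((m:ℝ)+1) * (C0 * (F * V))) := hGtsum
      _ ≤ B := hconst
  · rw [tsum_eq_zero_of_not_summable hsum]
    rw [hB]
    have := Real.rpow_nonneg hKpos.le ε
    have := Real.rpow_nonneg hmin.le (ε-2)
    positivity
end

section
/- Let $y, z : [0,T] \to M$ be elements of a ball $M$ of radius $\delta \le 1$ in $W(0,T;V,V')$ (measured by $\|y(0)\|_H + \|y\|_W \le \delta$), and let $Z$ map $y \in M$ to the solution of $z' + Az + B(y,y) = f$, $z(0) = y_0$, where the linear solution map has norm bound $\|Z(y)\|_W \le c_N e^{\lambda T}\|B(y,y) - B(y_2,y_2)\|_{L^2(0,T;V')}$ for differences. If $2\delta c_B c_N e^{\lambda T} \le 1/2$, then $Z$ is a contraction on $M$ with constant $1/2$: $\|Z(y_1) - Z(y_2)\|_W \le \frac{1}{2}\|y_1 - y_2\|_W$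 for all $y_1, y_2 \in M$. -/
open MeasureTheory

/-- Contraction property of the fixed-point map `Z` in the
well-posedness proof.  Gelfand triple `(V,H,V')` (embedding `e : V → H`); elements of
`W(0,T;V,V')` are encoded as pairs `(y, dy)`, with
`Wn y dy = ‖y‖_{W(0,T;V,V')} = √(‖y‖²_{L²V} + ‖dy‖²_{L²V'})`.  The ball `M` consists of
pairs with `‖y(0)‖_H + ‖y‖_W ≤ δ ≤ 1` (and common initial value).  `Z` maps `y` to the
solution of `z' + Az + B(y,y) = f`, `z(0) = y₀` (with derivative `dZ y`); the linear
solution-map difference bound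
`‖Z(y₁) − Z(y₂)‖_W ≤ c_N e^{λT} ‖B(y₁,y₁) − B(y₂,y₂)‖_{L²(0,T;V')}`
and the Lipschitz estimate
`‖B(y₁,y₁) − B(y₂,y₂)‖_{L²(0,T;V')} ≤ 2δ c_B ‖y₁ − y₂‖_W` on the ball are supplied as
hypotheses.  If `2 δ c_B c_N e^{λT} ≤ 1/2`, then `Z` is a `1/2`-contraction on `M`:
`‖Z(y₁) − Z(y₂)‖_W ≤ ½ ‖y₁ − y₂‖_W`. -/
theorem fixed_point_map_contraction
    {V H : Type*} [NormedAddCommGroup V] [NormedSpace ℝ V]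
    [NormedAddCommGroup H] [NormedSpace ℝ H]
    (e : V →L[ℝ] H)
    (B : V →ₗ[ℝ] V →ₗ[ℝ] (V →L[ℝ] ℝ))
    (cB cN lam δ T : ℝ)
    (hcB : 0 ≤ cB) (hcN : 1 ≤ cN) (hlam : 0 ≤ lam) (hT : 0 < T)
    (hδ0 : 0 ≤ δ) (hδ1 : δ ≤ 1)
    (hsmall : 2 * δ * cB * cN * Real.exp (lam * T) ≤ 1 / 2)
    (Wn : (ℝ → V) → (ℝ → (V →L[ℝ] ℝ)) → ℝ)
    (hWn : ∀ y dy, Wn y dy =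
      Real.sqrt ((∫ t in Set.Ioo 0 T, ‖y t‖ ^ 2) + ∫ t in Set.Ioo 0 T, ‖dy t‖ ^ 2))
    (Z : (ℝ → V) → (ℝ → V)) (dZ : (ℝ → V) → (ℝ → (V →L[ℝ] ℝ)))
    (hZ : ∀ y₁ y₂ : ℝ → V,
      Wn (fun t => Z y₁ t - Z y₂ t) (fun t => dZ y₁ t - dZ y₂ t) ≤
        cN * Real.exp (lam * T) *
          Real.sqrt (∫ t in Set.Ioo 0 T, ‖B (y₁ t) (y₁ t) - B (y₂ t) (y₂ t)‖ ^ 2))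
    (hLip : ∀ (y₁ y₂ : ℝ → V) (dy₁ dy₂ : ℝ → (V →L[ℝ] ℝ)),
      ‖e (y₁ 0)‖ + Wn y₁ dy₁ ≤ δ → ‖e (y₂ 0)‖ + Wn y₂ dy₂ ≤ δ →
      Real.sqrt (∫ t in Set.Ioo 0 T, ‖B (y₁ t) (y₁ t) - B (y₂ t) (y₂ t)‖ ^ 2) ≤
        2 * δ * cB * Wn (fun t => y₁ t - y₂ t) (fun t => dy₁ t - dy₂ t))
    (y₁ y₂ : ℝ → V) (dy₁ dy₂ : ℝ → (V →L[ℝ] ℝ))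
    (hy₁ : ‖e (y₁ 0)‖ + Wn y₁ dy₁ ≤ δ)
    (hy₂ : ‖e (y₂ 0)‖ + Wn y₂ dy₂ ≤ δ)
    (h0 : y₁ 0 = y₂ 0) :
    Wn (fun t => Z y₁ t - Z y₂ t) (fun t => dZ y₁ t - dZ y₂ t) ≤
      (1 / 2) * Wn (fun t => y₁ t - y₂ t) (fun t => dy₁ t - dy₂ t) := by
  have hce : (0:ℝ) ≤ cN * Real.exp (lam * T) :=
    mul_nonneg (by linarith) (Real.exp_pos _).le
  have hWnn : 0 ≤ Wn (fun t => y₁ t - y₂ t) (fun t => dy₁ t - dy₂ t) := by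
    rw [hWn]; exact Real.sqrt_nonneg _
  calc Wn (fun t => Z y₁ t - Z y₂ t) (fun t => dZ y₁ t - dZ y₂ t)
      ≤ cN * Real.exp (lam * T) *
        Real.sqrt (∫ t in Set.Ioo 0 T, ‖B (y₁ t) (y₁ t) - B (y₂ t) (y₂ t)‖ ^ 2) :=
        hZ y₁ y₂
    _ ≤ cN * Real.exp (lam * T) *
        (2 * δ * cB * Wn (fun t => y₁ t - y₂ t) (fun t => dy₁ t - dy₂ t)) :=
        mul_le_mul_of_nonneg_left (hLip y₁ y₂ dy₁ dy₂ hy₁ hy₂) hce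
    _ ≤ (1 / 2) * Wn (fun t => y₁ t - y₂ t) (fun t => dy₁ t - dy₂ t) := by
        nlinarith [mul_le_mul_of_nonneg_right hsmall hWnn]
end
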